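/- (Steady-state periodicity) Suppose there exists i ∈ {1,…,n} with b_{i,n} = 0 (which always holds by Lemma 1(i)). Then every sequence b_j, j ∈ {1,…,n}, is eventually periodic with period n: b_{j, k+n} = b_{j, k} for every integer k ≥ n + 1. In particular all n sequences converge to a common repeated pattern of length n. -/

import Mathlib

/-!
Write `x_t = a_{σ_j(t+1)}` and `S_k = x_0 + ⋯ + x_{k-1}`. Unrolling the recursion gives Lindley's
formula `b_{j,k} = S_k - min_{m ≤ k} S_m`. Since `∑ a = 0`, the partial sums `S` are `n`-periodic,
so as soon as `{0, …, k}` covers a full period, both `S_k` and the running minimum are unchanged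
when `k` is replaced by `k + n`.
-/

open Fin.NatCast

/-- The buffer sequence `(b_{i,j})_{j≥0}` built from `a`, starting cyclically at
index `i`: `b_{i,0} = 0`, `b_{i,j+1} = max{b_{i,j} + a_{σ_i(j+1)}, 0}` where the
cyclic index `σ_i(j+1)` is `i + j` in `Fin n`. -/
noncomputable def bseq {n : ℕ} [NeZero n] (a : Fin n → ℝ) (i : Fin n) : ℕ → ℝ
  | 0 => 0
  | j + 1 => max (bseq a i j + a (i + (j : Fin n))) 0

open Finset Function

namespace Function.Periodic

theorem sum_range {M : Type*} [AddCommMonoid M] {x : ℕ → M} {n : ℕ} (hx : Periodic x n)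
    (h : ∑ t ∈ range n, x t = 0) : Periodic (fun k ↦ ∑ t ∈ range k, x t) n := by
  intro k
  induction k with
  | zero => simpa using h
  | succ k ih =>
    simp only at ih ⊢
    rw [add_right_comm, sum_range_succ, ih, hx, sum_range_succ]

theorem inf'_range_eq {α : Type*} [SemilatticeInf α] {S : ℕ → α} {n N : ℕ}
    (hS : Periodic S n) (hn : 0 < n) (hN : n ≤ N) :
    (range N).inf' (nonempty_range_iff.2 (by omega)) S =
      (range n).inf' (nonempty_range_iff.2 (by omega)) S := by
  refine le_antisymm (inf'_mono _ (range_subset_range.2 hN) _) (le_inf' _ _ fun m _ ↦ ?_)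
  rw [← hS.map_mod_nat m]
  exact inf'_le _ (mem_range.2 (Nat.mod_lt m hn))

end Function.Periodic

theorem eq_sum_range_sub_inf'_of_lindley {α : Type*} [AddCommGroup α] [LinearOrder α]
    [IsOrderedAddMonoid α] {x w : ℕ → α} (h0 : w 0 = 0)
    (hsucc : ∀ k, w (k + 1) = max (w k + x k) 0) (k : ℕ) :
    w k = ∑ t ∈ range k, x t -
      (range (k + 1)).inf' nonempty_range_add_one (fun m ↦ ∑ t ∈ range m, x t) := by
  induction k with
  | zero => simp [h0]
  | succ k ih =>
    simp only [hsucc, ih, range_add_one (n := k + 1)]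
    rw [inf'_insert (H := nonempty_range_add_one), ← max_sub_sub_left, sub_self, max_comm,
      sum_range_succ, sub_add_eq_add_sub]

theorem periodic_comp_add_natCast {M : Type*} {n : ℕ} [NeZero n] (a : Fin n → M) (i : Fin n) :
    Periodic (fun t : ℕ ↦ a (i + (t : Fin n))) n :=
  fun t ↦ by simp

theorem sum_range_comp_add_natCast {M : Type*} [AddCommMonoid M] {n : ℕ} [NeZero n]
    (a : Fin n → M) (i : Fin n) : ∑ t ∈ range n, a (i + (t : Fin n)) = ∑ m, a m := by
  rw [← Fin.sum_univ_eq_sum_range (fun t ↦ a (i + (t : Fin n)))]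
  simp only [Fin.cast_val_eq_self]
  exact Equiv.sum_comp (Equiv.addLeft i) a

theorem bseq_eventually_periodic_general {n : ℕ} [NeZero n]
    (a : Fin n → ℝ) (ha : ∑ m, a m = 0) :
    ∀ j : Fin n, ∀ k : ℕ, n + 1 ≤ k → bseq a j (k + n) = bseq a j k := by
  intro j k hk
  have hS := (periodic_comp_add_natCast a j).sum_range (by rw [sum_range_comp_add_natCast, ha])
  have hlindley := eq_sum_range_sub_inf'_of_lindley (w := bseq a j) rfl fun _ ↦ rfl
  have hSk : ∑ t ∈ range (k + n), a (j + (t : Fin n)) = ∑ t ∈ range k, a (j + (t : Fin n)) :=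
    hS k
  rw [hlindley, hlindley, hSk, hS.inf'_range_eq (N := k + n + 1) (NeZero.pos n) (by omega),
    hS.inf'_range_eq (N := k + 1) (NeZero.pos n) (by omega)]

theorem bseq_eventually_periodic {n : ℕ} [NeZero n] (hn : 2 ≤ n)
    (a : Fin n → ℝ) (ha : ∑ m, a m = 0)
    (hex : ∃ i : Fin n, bseq a i n = 0) :
    ∀ j : Fin n, ∀ k : ℕ, n + 1 ≤ k → bseq a j (k + n) = bseq a j k :=
  bseq_eventually_periodic_general a ha
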